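/- arXiv:1609.09119 — 2 statements merged into one kernel-verified Lean document; each statement's English description precedes it below -/
import Mathlib

section
/- Let X be a derivation on smooth functions on an open subset W of S such that Xz₁ = Xz₂ = 0, Xw₁ = z₂, Xw₂ = −z₁, where z₁w₁ + z₂w₂ = 1 on W. Then for any smooth function f on W, XXf = 0 if and only if f = f₁w₁ + f₂w₂ for some functions f₁, f₂ with Xf₁ = Xf₂ = 0. Explicitly, if XXf = 0 then f₁ := z₁f + w₂Xf and f₂ := z₂f − w₁Xf satisfy Xf₁ = Xf₂ = 0 and f = f₁w₁ + f₂w₂. -/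
/-- for a derivation `X` with `Xz₁ = Xz₂ = 0`, `Xw₁ = z₂`, `Xw₂ = -z₁`
and `z₁w₁ + z₂w₂ = 1`, one has `XXf = 0` iff `f = f₁w₁ + f₂w₂` with `Xf₁ = Xf₂ = 0`;
explicitly `f₁ = z₁f + w₂Xf`, `f₂ = z₂f - w₁Xf` work. -/
theorem stmt3 {A : Type*} [CommRing A] [Algebra ℂ A]
    (X : Derivation ℂ A A) (z₁ z₂ w₁ w₂ : A)
    (hrel : z₁ * w₁ + z₂ * w₂ = 1)
    (hz₁ : X z₁ = 0) (hz₂ : X z₂ = 0)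
    (hw₁ : X w₁ = z₂) (hw₂ : X w₂ = -z₁) (f : A) :
    (X (X f) = 0 ↔ ∃ f₁ f₂ : A, X f₁ = 0 ∧ X f₂ = 0 ∧ f = f₁ * w₁ + f₂ * w₂) ∧
    (X (X f) = 0 →
      X (z₁ * f + w₂ * X f) = 0 ∧ X (z₂ * f - w₁ * X f) = 0 ∧
      f = (z₁ * f + w₂ * X f) * w₁ + (z₂ * f - w₁ * X f) * w₂) := by
  have key : ∀ g : A, X (X g) = 0 →
      X (z₁ * g + w₂ * X g) = 0 ∧ X (z₂ * g - w₁ * X g) = 0 ∧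
      g = (z₁ * g + w₂ * X g) * w₁ + (z₂ * g - w₁ * X g) * w₂ := by
    intro g hg
    refine ⟨?_, ?_, ?_⟩
    · rw [map_add, X.leibniz, X.leibniz, hz₁, hw₂, hg]
      simp only [smul_eq_mul]; ring
    · rw [map_sub, X.leibniz, X.leibniz, hz₂, hw₁, hg]
      simp only [smul_eq_mul]; ring
    · have : (z₁ * g + w₂ * X g) * w₁ + (z₂ * g - w₁ * X g) * w₂
          = g * (z₁ * w₁ + z₂ * w₂) := by ring
      rw [this, hrel, mul_one]
  constructor
  · constructor
    · intro hf
      exact ⟨_, _, key f hf⟩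
    · rintro ⟨f₁, f₂, h₁, h₂, rfl⟩
      rw [map_add, X.leibniz, X.leibniz, h₁, h₂, hw₁, hw₂]
      simp only [smul_eq_mul, zero_mul, mul_zero, zero_add, add_zero, smul_zero]
      simp [h₁, h₂, hz₁, hz₂]
  · exact key f
end

section
/- Given a point p on a strongly pseudoconvex hypersurface S ⊂ ℂ², every 2-jet at p of a ℂ-valued smooth function on S is the 2-jet at p of the restriction to S of a pluriharmonic polynomial on ℂ². In fact, in coordinates where p = 0 and S is locally y₂ = |z₁|² + O(‖(z₁,x₂)‖³), the 2-jet A + Bz₁ + Cz̄₁ + Dx₂ + Ez₁² + Fz̄₁² + Gz₁z̄₁ + Hz₁x₂ + Iz̄₁x₂ + Jx₂² is induced by the pluriharmonic polynomial A + Bz₁ + Cz̄₁ + ((D−iG)/2)z₂ + ((D+iG)/2)z̄₂ + Ez₁² + Fz̄₁² + Hz₁z₂ + Iz̄₁z̄₂ + Jz̄₂². -/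
open Complex ComplexConjugate Asymptotics

noncomputable def wirt {n : ℕ} (j : Fin n) (f : (Fin n → ℂ) → ℂ) (x : Fin n → ℂ) : ℂ :=
  (fderiv ℝ f x (Pi.single j 1) - Complex.I * fderiv ℝ f x (Pi.single j Complex.I)) / 2

noncomputable def wirtBar {n : ℕ} (j : Fin n) (f : (Fin n → ℂ) → ℂ) (x : Fin n → ℂ) : ℂ :=
  (fderiv ℝ f x (Pi.single j 1) + Complex.I * fderiv ℝ f x (Pi.single j Complex.I)) / 2

lemma single_I' {n : ℕ} (k : Fin n) :
    (Pi.single k Complex.I : Fin n → ℂ) = Complex.I • (Pi.single k 1 : Fin n → ℂ) := by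
  funext m
  by_cases h : m = k <;> simp [Pi.single_apply, h]

lemma fderiv_I' {n : ℕ} {f : (Fin n → ℂ) → ℂ} {x : Fin n → ℂ}
    (hf : DifferentiableAt ℂ f x) (k : Fin n) :
    fderiv ℝ f x (Pi.single k Complex.I) = Complex.I * fderiv ℝ f x (Pi.single k 1) := by
  rw [(hf.hasFDerivAt.restrictScalars ℝ).fderiv, single_I']
  simp [smul_eq_mul]

lemma wirtBar_holo' {n : ℕ} {f : (Fin n → ℂ) → ℂ} {x : Fin n → ℂ}
    (hf : DifferentiableAt ℂ f x) (k : Fin n) : wirtBar k f x = 0 := by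
  unfold wirtBar
  rw [fderiv_I' hf]
  rw [show (Complex.I * (Complex.I * (fderiv ℝ f x) (Pi.single k 1)))
      = -((fderiv ℝ f x) (Pi.single k 1)) by rw [← mul_assoc, Complex.I_mul_I]; ring]
  ring

lemma fderiv_conj_eq' {n : ℕ} (g : (Fin n → ℂ) → ℂ) (x : Fin n → ℂ) (v : Fin n → ℂ) :
    fderiv ℝ (fun y => conj (g y)) x v = conj (fderiv ℝ g x v) := by
  have hc : (fun y => conj (g y)) = (⇑Complex.conjCLE ∘ g) := rfl
  rw [hc, Complex.conjCLE.comp_fderiv]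
  simp

lemma wirt_conj_holo' {n : ℕ} {g : (Fin n → ℂ) → ℂ} {x : Fin n → ℂ}
    (hg : DifferentiableAt ℂ g x) (j : Fin n) :
    wirt j (fun y => conj (g y)) x = 0 := by
  unfold wirt
  rw [fderiv_conj_eq', fderiv_conj_eq', fderiv_I' hg]
  simp [map_mul, Complex.conj_I]
  ring_nf
  simp [Complex.I_sq]

lemma wirtBar_conj' {n : ℕ} {g : (Fin n → ℂ) → ℂ} {x : Fin n → ℂ}
    (hg : DifferentiableAt ℂ g x) (k : Fin n) :
    wirtBar k (fun y => conj (g y)) x = conj (fderiv ℝ g x (Pi.single k 1)) := by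
  unfold wirtBar
  rw [fderiv_conj_eq', fderiv_conj_eq', fderiv_I' hg]
  simp [map_mul, Complex.conj_I]
  ring_nf
  simp [Complex.I_sq]
  ring

lemma wirtBar_add' {n : ℕ} {f g : (Fin n → ℂ) → ℂ} {x : Fin n → ℂ}
    (hf : DifferentiableAt ℝ f x) (hg : DifferentiableAt ℝ g x) (k : Fin n) :
    wirtBar k (fun y => f y + g y) x = wirtBar k f x + wirtBar k g x := by
  unfold wirtBar
  rw [fderiv_fun_add hf hg]
  simp
  ring

noncomputable def stmt9P (A B D E G H : ℂ) : (Fin 2 → ℂ) → ℂ := fun x =>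
  A + B * x 0 + ((D - Complex.I * G) / 2) * x 1 + E * (x 0) ^ 2 + H * (x 0 * x 1)

noncomputable def stmt9Q (C D F G I₀ J : ℂ) : (Fin 2 → ℂ) → ℂ := fun x =>
  conj C * x 0 + conj ((D + Complex.I * G) / 2) * x 1 + conj F * (x 0) ^ 2
    + conj I₀ * (x 0 * x 1) + conj J * (x 1) ^ 2

noncomputable def stmt9U (A B C D E F G H I₀ J : ℂ) : (Fin 2 → ℂ) → ℂ := fun x =>
  stmt9P A B D E G H x + conj (stmt9Q C D F G I₀ J x)

lemma stmt9Q_contDiff (C D F G I₀ J : ℂ) : ContDiff ℂ ⊤ (stmt9Q C D F G I₀ J) := by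
  unfold stmt9Q; fun_prop

lemma stmt9P_diff (A B D E G H : ℂ) : Differentiable ℂ (stmt9P A B D E G H) := by
  unfold stmt9P; fun_prop

lemma stmt9_alg (A B C D E F G H I₀ J a : ℂ) (x e : ℝ) :
    stmt9U A B C D E F G H I₀ J ![a, (x:ℂ) + Complex.I * ((Complex.normSq a + e : ℝ):ℂ)]
    - (A + B*a + C*conj a + D*(x:ℂ) + E*a^2 + F*(conj a)^2 + G*(a*conj a)
      + H*(a*(x:ℂ)) + I₀*(conj a * (x:ℂ)) + J*(x:ℂ)^2)
    = G*((e:ℝ):ℂ) + Complex.I*H*(a*((Complex.normSq a + e : ℝ):ℂ))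
      - Complex.I*I₀*(conj a*((Complex.normSq a + e : ℝ):ℂ))
      - 2*Complex.I*J*((x:ℂ)*((Complex.normSq a + e : ℝ):ℂ))
      - J*(((Complex.normSq a + e : ℝ):ℂ) * ((Complex.normSq a + e : ℝ):ℂ)) := by
  simp only [stmt9U, stmt9P, stmt9Q, Matrix.cons_val_zero, Matrix.cons_val_one, Matrix.head_cons,
    map_add, map_mul, map_pow, Complex.conj_conj, Complex.conj_ofReal, Complex.conj_I]
  push_cast
  rw [← Complex.mul_conj]
  ring_nf
  simp only [Complex.I_sq]
  ring

/-- on a strongly pseudoconvex hypersurface written in local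
coordinates as `y₂ = |z₁|² + O(‖(z₁,x₂)‖³)`, every 2-jet
`A + Bz₁ + Cz̄₁ + Dx₂ + Ez₁² + Fz̄₁² + Gz₁z̄₁ + Hz₁x₂ + Iz̄₁x₂ + Jx₂²`
is the 2-jet at `0` of the restriction to the hypersurface of a pluriharmonic
function on `ℂ²`. -/
theorem stmt9 (ε : ℂ × ℝ → ℝ)
    (hε : (fun p : ℂ × ℝ => (ε p : ℂ)) =O[nhds 0] (fun p : ℂ × ℝ => ‖p‖ ^ 3))
    (A B C D E F G H I₀ J : ℂ) :
    ∃ U : (Fin 2 → ℂ) → ℂ, ContDiff ℝ (⊤ : ℕ∞) U ∧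
      (∀ (j k : Fin 2) (x : Fin 2 → ℂ), wirt j (fun y => wirtBar k U y) x = 0) ∧
      (fun p : ℂ × ℝ =>
          U ![p.1, (p.2 : ℂ) + Complex.I * ((Complex.normSq p.1 + ε p : ℝ) : ℂ)]
            - (A + B * p.1 + C * conj p.1 + D * (p.2 : ℂ) + E * p.1 ^ 2
                + F * (conj p.1) ^ 2 + G * (p.1 * conj p.1) + H * (p.1 * (p.2 : ℂ))
                + I₀ * (conj p.1 * (p.2 : ℂ)) + J * (p.2 : ℂ) ^ 2))
        =o[nhds 0] (fun p : ℂ × ℝ => ‖p‖ ^ 2) := by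
  refine ⟨stmt9U A B C D E F G H I₀ J, ?_, ?_, ?_⟩
  · -- smoothness
    have hq : ContDiff ℝ (⊤ : ℕ∞) (stmt9Q C D F G I₀ J) := by unfold stmt9Q; fun_prop
    have hp : ContDiff ℝ (⊤ : ℕ∞) (stmt9P A B D E G H) := by unfold stmt9P; fun_prop
    have hc : ContDiff ℝ (⊤ : ℕ∞) (fun z : ℂ => conj z) :=
      Complex.conjCLE.toContinuousLinearMap.contDiff
    exact hp.add (hc.comp hq)
  · intro j k x
    have hQd := (stmt9Q_contDiff C D F G I₀ J).differentiable (by simp)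
    have hPd := stmt9P_diff A B D E G H
    have heq : (fun y => wirtBar k (stmt9U A B C D E F G H I₀ J) y)
        = fun y => conj (fderiv ℂ (stmt9Q C D F G I₀ J) y (Pi.single k 1)) := by
      funext y
      have h2 : fderiv ℝ (stmt9Q C D F G I₀ J) y
          = (fderiv ℂ (stmt9Q C D F G I₀ J) y).restrictScalars ℝ :=
        ((hQd y).hasFDerivAt.restrictScalars ℝ).fderiv
      have hcq : DifferentiableAt ℝ (fun z => conj (stmt9Q C D F G I₀ J z)) y :=
        (Complex.conjCLE.differentiable.comp (hQd.restrictScalars ℝ)) y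
      have h3 : wirtBar k (stmt9U A B C D E F G H I₀ J) y
          = wirtBar k (stmt9P A B D E G H) y
            + wirtBar k (fun z => conj (stmt9Q C D F G I₀ J z)) y := by
        rw [← wirtBar_add' ((hPd y).restrictScalars ℝ) hcq]
        rfl
      rw [h3, wirtBar_holo' (hPd y), wirtBar_conj' (hQd y), zero_add, h2]
      rfl
    rw [heq]
    have hg : DifferentiableAt ℂ
        (fun y => fderiv ℂ (stmt9Q C D F G I₀ J) y (Pi.single k 1)) x := by
      have h1 : ContDiff ℂ ⊤ (fderiv ℂ (stmt9Q C D F G I₀ J)) :=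
        (stmt9Q_contDiff C D F G I₀ J).fderiv_right (mod_cast le_top)
      exact (((ContinuousLinearMap.apply ℂ ℂ (Pi.single k 1)).contDiff.comp
        h1).differentiable (by simp)) x
    exact wirt_conj_holo' hg j
  · -- asymptotics
    have h3 : (fun p : ℂ × ℝ => ‖p‖ ^ 3) =o[nhds 0] (fun p : ℂ × ℝ => ‖p‖ ^ 2) :=
      (isLittleO_pow_pow (by norm_num)).comp_tendsto tendsto_norm_zero
    have h4 : (fun p : ℂ × ℝ => ‖p‖ ^ 4) =o[nhds 0] (fun p : ℂ × ℝ => ‖p‖ ^ 2) :=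
      (isLittleO_pow_pow (by norm_num)).comp_tendsto tendsto_norm_zero
    have h3' : (fun p : ℂ × ℝ => ‖p‖ * ‖p‖ ^ 2) =o[nhds 0] (fun p : ℂ × ℝ => ‖p‖ ^ 2) := by
      have : (fun p : ℂ × ℝ => ‖p‖ * ‖p‖ ^ 2) = fun p => ‖p‖ ^ 3 := by funext p; ring
      rw [this]; exact h3
    have h4' : (fun p : ℂ × ℝ => ‖p‖ ^ 2 * ‖p‖ ^ 2) =o[nhds 0] (fun p : ℂ × ℝ => ‖p‖ ^ 2) := by
      have : (fun p : ℂ × ℝ => ‖p‖ ^ 2 * ‖p‖ ^ 2) = fun p => ‖p‖ ^ 4 := by funext p; ring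
      rw [this]; exact h4
    set T : ℂ × ℝ → ℂ := fun p => ((Complex.normSq p.1 + ε p : ℝ) : ℂ) with hTdef
    have hT : T =O[nhds 0] (fun p : ℂ × ℝ => ‖p‖ ^ 2) := by
      have hn : (fun p : ℂ × ℝ => ((Complex.normSq p.1 : ℝ) : ℂ)) =O[nhds 0]
          (fun p : ℂ × ℝ => ‖p‖ ^ 2) := by
        refine IsBigO.of_bound 1 (Filter.Eventually.of_forall fun p => ?_)
        have h1 : ‖((Complex.normSq p.1 : ℝ) : ℂ)‖ = Complex.normSq p.1 := by
          rw [Complex.norm_real, Real.norm_eq_abs, _root_.abs_of_nonneg (Complex.normSq_nonneg _)]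
        rw [h1, one_mul]
        have : Complex.normSq p.1 = ‖p.1‖ ^ 2 := by
          rw [← Complex.sq_norm]
        rw [this]
        have hle : ‖p.1‖ ^ 2 ≤ ‖p‖ ^ 2 := by
          apply pow_le_pow_left₀ (norm_nonneg _) (norm_fst_le p)
        calc ‖p.1‖ ^ 2 ≤ ‖p‖ ^ 2 := hle
          _ ≤ ‖‖p‖ ^ 2‖ := le_abs_self _
      have hsplit : T = fun p => ((Complex.normSq p.1 : ℝ) : ℂ) + (ε p : ℂ) := by
        funext p; rw [hTdef]; push_cast; ring
      rw [hsplit]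
      exact hn.add (hε.trans h3.isBigO)
    have hz : (fun p : ℂ × ℝ => p.1) =O[nhds 0] (fun p : ℂ × ℝ => ‖p‖) :=
      IsBigO.of_bound 1 (Filter.Eventually.of_forall fun p => by
        simpa using (norm_fst_le p).trans (le_abs_self _))
    have hzc : (fun p : ℂ × ℝ => conj p.1) =O[nhds 0] (fun p : ℂ × ℝ => ‖p‖) :=
      IsBigO.of_bound 1 (Filter.Eventually.of_forall fun p => by
        simpa using (norm_fst_le p).trans (le_abs_self _))
    have hx : (fun p : ℂ × ℝ => ((p.2 : ℝ) : ℂ)) =O[nhds 0] (fun p : ℂ × ℝ => ‖p‖) :=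
      IsBigO.of_bound 1 (Filter.Eventually.of_forall fun p => by
        rw [Complex.norm_real, one_mul]
        exact (norm_snd_le p).trans (le_abs_self _))
    have t1 : (fun p : ℂ × ℝ => G * ((ε p : ℝ) : ℂ)) =o[nhds 0]
        (fun p : ℂ × ℝ => ‖p‖ ^ 2) := (hε.trans_isLittleO h3).const_mul_left G
    have t2 : (fun p : ℂ × ℝ => Complex.I * H * (p.1 * T p)) =o[nhds 0]
        (fun p : ℂ × ℝ => ‖p‖ ^ 2) :=
      (((hz.mul hT).trans_isLittleO h3').const_mul_left (Complex.I * H))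
    have t3 : (fun p : ℂ × ℝ => Complex.I * I₀ * (conj p.1 * T p)) =o[nhds 0]
        (fun p : ℂ × ℝ => ‖p‖ ^ 2) :=
      (((hzc.mul hT).trans_isLittleO h3').const_mul_left (Complex.I * I₀))
    have t4 : (fun p : ℂ × ℝ => 2 * Complex.I * J * (((p.2 : ℝ) : ℂ) * T p)) =o[nhds 0]
        (fun p : ℂ × ℝ => ‖p‖ ^ 2) :=
      (((hx.mul hT).trans_isLittleO h3').const_mul_left (2 * Complex.I * J))
    have t5 : (fun p : ℂ × ℝ => J * (T p * T p)) =o[nhds 0]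
        (fun p : ℂ × ℝ => ‖p‖ ^ 2) :=
      (((hT.mul hT).trans_isLittleO h4').const_mul_left J)
    have hR := (((t1.add t2).sub t3).sub t4).sub t5
    have hfun : (fun p : ℂ × ℝ =>
          stmt9U A B C D E F G H I₀ J
              ![p.1, (p.2 : ℂ) + Complex.I * ((Complex.normSq p.1 + ε p : ℝ) : ℂ)]
            - (A + B * p.1 + C * conj p.1 + D * (p.2 : ℂ) + E * p.1 ^ 2
                + F * (conj p.1) ^ 2 + G * (p.1 * conj p.1) + H * (p.1 * (p.2 : ℂ))
                + I₀ * (conj p.1 * (p.2 : ℂ)) + J * (p.2 : ℂ) ^ 2))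
        = fun p : ℂ × ℝ => G * ((ε p : ℝ) : ℂ) + Complex.I * H * (p.1 * T p)
            - Complex.I * I₀ * (conj p.1 * T p)
            - 2 * Complex.I * J * (((p.2 : ℝ) : ℂ) * T p) - J * (T p * T p) := by
      funext p
      exact stmt9_alg A B C D E F G H I₀ J p.1 p.2 (ε p)
    rw [hfun]
    exact hR
end
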